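/- arXiv:1004.1595 — 2 statements merged into one kernel-verified Lean document; each statement's English description precedes it below -/
import Mathlib

section
/- Let V be a complex vector space of even dimension 2m and let Q be a nondegenerate quadratic form on V. Then the Clifford algebra Cl(V,Q) is isomorphic, as a ℂ-algebra, to the algebra of 2^m × 2^m complex matrices; in particular Cl(V,Q) ≅ End(S) for a complex vector space S of dimension 2^m (the spinor module). -/
/-!
Over an algebraically closed field `K` with `2 ≠ 0`, a nondegenerate quadratic form in dimension
`2m` is a sum of `2m` squares. Writing vectors of `K^(n+2)` as `(w, a, b)` with `w ∈ K^n` and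
choosing `i² = -1`, the block matrix `[[ι w, a - i b], [a + i b, -ι w]]` squares to
`(∑ wⱼ² + a² + b²) • 1`, so it defines an algebra map `Cl(K^(n+2)) → M₂(Cl(K^n))`, which is onto.
Iterating gives a surjection `Cl(Q) → M_{2^m}(K)`; it is injective because `Cl(Q)` has the
dimension `2^(2m)` of the exterior algebra.
-/

open CliffordAlgebra QuadraticMap

def QuadraticForm.sumSquares (R : Type*) [CommRing R] (n : ℕ) : QuadraticForm R (Fin n → R) :=
  weightedSumSquares R (1 : Fin n → R)

open QuadraticForm

lemma QuadraticForm.sumSquares_apply {R : Type*} [CommRing R] {n : ℕ} (v : Fin n → R) :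
    sumSquares R n v = ∑ j, v j ^ 2 := by
  simp [sumSquares, weightedSumSquares_apply, pow_two]

theorem CliffordAlgebra.finrank_eq_two_pow {K V : Type*} [Field K] [Invertible (2 : K)]
    [AddCommGroup V] [Module K V] [FiniteDimensional K V] (Q : QuadraticForm K V) :
    Module.finrank K (CliffordAlgebra Q) = 2 ^ Module.finrank K V := by
  rw [(equivExterior Q).finrank_eq,
    Module.finrank_eq_card_basis (Module.finBasis K V).ExteriorAlgebra, Fintype.card_finset,
    Fintype.card_fin]

instance CliffordAlgebra.finiteDimensional {K V : Type*} [Field K] [Invertible (2 : K)]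
    [AddCommGroup V] [Module K V] [FiniteDimensional K V] (Q : QuadraticForm K V) :
    FiniteDimensional K (CliffordAlgebra Q) :=
  Module.Finite.of_basis ((Module.finBasis K V).ExteriorAlgebra.map (equivExterior Q).symm)

namespace CliffordAlgebra.SumSquares

variable {R : Type*} [CommRing R] (i : R) (n : ℕ)

abbrev restrict : (Fin (n + 2) → R) →ₗ[R] Fin n → R :=
  LinearMap.funLeft R R fun j => j.castSucc.castSucc

lemma sumSquares_add_two (v : Fin (n + 2) → R) :
    sumSquares R (n + 2) v =
      sumSquares R n (restrict n v) + v (Fin.last n).castSucc ^ 2 + v (Fin.last (n + 1)) ^ 2 := by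
  simp [sumSquares_apply, Fin.sum_univ_castSucc, add_assoc]

def blockι :
    (Fin (n + 2) → R) →ₗ[R] Matrix (Fin 2) (Fin 2) (CliffordAlgebra (sumSquares R n)) where
  toFun v :=
    !![ι _ (restrict n v), algebraMap R _ (v (Fin.last n).castSucc - i * v (Fin.last (n + 1)));
      algebraMap R _ (v (Fin.last n).castSucc + i * v (Fin.last (n + 1))), -ι _ (restrict n v)]
  map_add' v w := by
    ext p q
    fin_cases p <;> fin_cases q <;> simp [mul_add] <;> abel
  map_smul' c v := by
    ext p q
    fin_cases p <;> fin_cases q <;> simp [Algebra.algebraMap_eq_smul_one, smul_smul] <;>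
      congr 1 <;> ring

lemma blockι_apply (v : Fin (n + 2) → R) :
    blockι i n v =
      !![ι _ (restrict n v), algebraMap R _ (v (Fin.last n).castSucc - i * v (Fin.last (n + 1)));
        algebraMap R _ (v (Fin.last n).castSucc + i * v (Fin.last (n + 1))), -ι _ (restrict n v)] :=
  rfl

variable {i}

lemma blockι_mul_self (hi : i * i = -1) (v : Fin (n + 2) → R) :
    blockι i n v * blockι i n v = algebraMap R _ (sumSquares R (n + 2) v) := by
  have hw := ι_sq_scalar (sumSquares R n) (restrict n v)
  rw [blockι_apply, Matrix.mul_fin_two, sumSquares_add_two, add_assoc]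
  ext p q
  fin_cases p <;> fin_cases q <;>
    simp [Matrix.algebraMap_matrix_apply, -map_sub, -map_add, -map_mul, hw,
      Algebra.commutes _ (ι (sumSquares R n) (restrict n v))]
  all_goals
    rw [← map_mul, ← map_add]
    congr 1
    linear_combination (-v (Fin.last (n + 1)) ^ 2) * hi

variable (hi : i * i = -1)

def toBlockMatrix : CliffordAlgebra (sumSquares R (n + 2)) →ₐ[R]
    Matrix (Fin 2) (Fin 2) (CliffordAlgebra (sumSquares R n)) :=
  lift _ ⟨blockι i n, blockι_mul_self n hi⟩

lemma toBlockMatrix_ι_snoc (w : Fin n → R) (a b : R) :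
    toBlockMatrix n hi (ι _ (Fin.snoc (Fin.snoc w a) b)) =
      !![ι _ w, algebraMap R _ (a - i * b); algebraMap R _ (a + i * b), -ι _ w] := by
  have hw : restrict n (Fin.snoc (Fin.snoc w a) b : Fin (n + 2) → R) = w := by
    ext j
    simp [LinearMap.funLeft_apply]
  rw [toBlockMatrix, lift_ι_apply, blockι_apply, hw]
  simp

variable [Invertible (2 : R)]

lemma single_one_mem_range_toBlockMatrix (p q : Fin 2) :
    Matrix.single p q 1 ∈ (toBlockMatrix n hi).range := by
  have h01 : Matrix.single 0 1 1 =
      toBlockMatrix n hi (ι _ (Fin.snoc (Fin.snoc 0 (⅟2 : R)) (i * ⅟2))) := by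
    have h1 : ⅟2 - i * (i * ⅟2) = (1 : R) := by
      linear_combination (-⅟2 : R) * hi + invOf_two_add_invOf_two (R := R)
    have h0 : ⅟2 + i * (i * ⅟2) = (0 : R) := by linear_combination (⅟2 : R) * hi
    rw [toBlockMatrix_ι_snoc, h0, h1]
    ext p q
    fin_cases p <;> fin_cases q <;> simp
  have h10 : Matrix.single 1 0 1 =
      toBlockMatrix n hi (ι _ (Fin.snoc (Fin.snoc 0 (⅟2 : R)) (-(i * ⅟2)))) := by
    have h1 : ⅟2 + i * -(i * ⅟2) = (1 : R) := by
      linear_combination (-⅟2 : R) * hi + invOf_two_add_invOf_two (R := R)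
    have h0 : ⅟2 - i * -(i * ⅟2) = (0 : R) := by linear_combination (⅟2 : R) * hi
    rw [toBlockMatrix_ι_snoc, h0, h1]
    ext p q
    fin_cases p <;> fin_cases q <;> simp
  have h01_mem : Matrix.single (0 : Fin 2) 1 (1 : CliffordAlgebra (sumSquares R n)) ∈
      (toBlockMatrix n hi).range := h01 ▸ AlgHom.mem_range_self _ _
  have h10_mem : Matrix.single (1 : Fin 2) 0 (1 : CliffordAlgebra (sumSquares R n)) ∈
      (toBlockMatrix n hi).range := h10 ▸ AlgHom.mem_range_self _ _
  fin_cases p <;> fin_cases q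
  · simpa using mul_mem h01_mem h10_mem
  · exact h01_mem
  · exact h10_mem
  · simpa using mul_mem h10_mem h01_mem

lemma scalar_mem_range_toBlockMatrix (x : CliffordAlgebra (sumSquares R n)) :
    Matrix.scalar (Fin 2) x ∈ (toBlockMatrix n hi).range := by
  induction x using CliffordAlgebra.induction with
  | algebraMap r =>
    convert Subalgebra.algebraMap_mem _ r using 1
    rw [Matrix.scalar_apply, Matrix.algebraMap_eq_diagonal]
    rfl
  | ι w =>
    have hw : Matrix.scalar (Fin 2) (ι _ w) =
        toBlockMatrix n hi (ι _ (Fin.snoc (Fin.snoc w 0) 0)) *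
          (Matrix.single 0 0 1 - Matrix.single 1 1 1) := by
      rw [toBlockMatrix_ι_snoc]
      ext p q
      fin_cases p <;> fin_cases q <;> simp [Matrix.mul_apply, Matrix.single_apply]
    rw [hw]
    exact mul_mem (AlgHom.mem_range_self _ _) (sub_mem
      (single_one_mem_range_toBlockMatrix n hi 0 0) (single_one_mem_range_toBlockMatrix n hi 1 1))
  | mul x y hx hy => rw [map_mul]; exact mul_mem hx hy
  | add x y hx hy => rw [map_add]; exact add_mem hx hy

theorem toBlockMatrix_surjective : Function.Surjective (toBlockMatrix n hi) := by
  intro M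
  change M ∈ (toBlockMatrix n hi).range
  rw [Matrix.matrix_eq_sum_single M]
  refine sum_mem fun p _ => sum_mem fun q _ => ?_
  have hpq : Matrix.single p q (M p q) = Matrix.scalar (Fin 2) (M p q) * Matrix.single p q 1 := by
    rw [Matrix.scalar_apply, ← Matrix.smul_eq_diagonal_mul, Matrix.smul_single, smul_eq_mul,
      mul_one]
  rw [hpq]
  exact mul_mem (scalar_mem_range_toBlockMatrix n hi _) (single_one_mem_range_toBlockMatrix n hi p q)

end CliffordAlgebra.SumSquares

open CliffordAlgebra.SumSquares in
theorem CliffordAlgebra.exists_surjective_sumSquares_two_mul_toMatrix {R : Type*} [CommRing R]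
    [Invertible (2 : R)] {i : R} (hi : i * i = -1) (m : ℕ) :
    ∃ f : CliffordAlgebra (sumSquares R (2 * m)) →ₐ[R] Matrix (Fin (2 ^ m)) (Fin (2 ^ m)) R,
      Function.Surjective f := by
  induction m with
  | zero =>
    refine ⟨lift _ ⟨0, fun v => by simp [sumSquares_apply]⟩,
      fun M => ⟨algebraMap R _ (M 0 0), ?_⟩⟩
    rw [AlgHom.commutes]
    ext p q
    fin_cases p; fin_cases q
    simp [Matrix.algebraMap_matrix_apply]
  | succ m ih =>
    obtain ⟨f, hf⟩ := ih
    let blocks := Matrix.compAlgEquiv (Fin 2) (Fin (2 ^ m)) R R |>.trans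
      (Matrix.reindexAlgEquiv R R (finProdFinEquiv.trans (finCongr (pow_succ' 2 m).symm)))
    exact ⟨blocks.toAlgHom.comp (f.mapMatrix.comp (toBlockMatrix (2 * m) hi)),
      blocks.surjective.comp (hf.comp_left.comp_left.comp (toBlockMatrix_surjective (2 * m) hi))⟩

theorem CliffordAlgebra.nonempty_algEquiv_matrix_of_isAlgClosed {K V : Type*} [Field K]
    [IsAlgClosed K] [Invertible (2 : K)] [AddCommGroup V] [Module K V] [FiniteDimensional K V]
    {m : ℕ} (hdim : Module.finrank K V = 2 * m) (Q : QuadraticForm K V)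
    (hQ : (associated Q).SeparatingLeft) :
    Nonempty (CliffordAlgebra Q ≃ₐ[K] Matrix (Fin (2 ^ m)) (Fin (2 ^ m)) K) := by
  obtain ⟨i, hi⟩ := IsAlgClosed.exists_eq_mul_self (-1 : K)
  obtain ⟨e⟩ := equivalent_weightedSumSquares_of_isAlgClosed Q hQ
  rw [hdim] at e
  obtain ⟨f, hf⟩ := exists_surjective_sumSquares_two_mul_toMatrix hi.symm m
  let g := f.comp (equivOfIsometry e).toAlgHom
  have hg : Function.Surjective g := hf.comp (equivOfIsometry e).surjective
  have hrank : Module.finrank K (CliffordAlgebra Q) =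
      Module.finrank K (Matrix (Fin (2 ^ m)) (Fin (2 ^ m)) K) := by
    rw [finrank_eq_two_pow, hdim, Module.finrank_matrix, Module.finrank_self, Fintype.card_fin,
      two_mul, pow_add, mul_one]
  exact ⟨.ofBijective g
    ⟨(LinearMap.injective_iff_surjective_of_finrank_eq_finrank hrank (f := g.toLinearMap)).2 hg,
      hg⟩⟩

theorem stmt2 (V : Type) [AddCommGroup V] [Module ℂ V] [FiniteDimensional ℂ V]
    (m : ℕ) (hdim : Module.finrank ℂ V = 2 * m)
    (Q : QuadraticForm ℂ V) (hQ : (QuadraticMap.polarBilin Q).Nondegenerate) :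
    Nonempty (CliffordAlgebra Q ≃ₐ[ℂ] Matrix (Fin (2 ^ m)) (Fin (2 ^ m)) ℂ) ∧
      ∃ (S : Type) (_ : AddCommGroup S) (_ : Module ℂ S),
        Module.finrank ℂ S = 2 ^ m ∧ Nonempty (CliffordAlgebra Q ≃ₐ[ℂ] Module.End ℂ S) := by
  obtain ⟨E⟩ := nonempty_algEquiv_matrix_of_isAlgClosed hdim Q
    (nondegenerate_associated_iff.2 (nondegenerate_polar_iff.1 hQ)).1
  exact ⟨⟨E⟩, Fin (2 ^ m) → ℂ, _, _, Module.finrank_fin_fun ℂ, ⟨E.trans Matrix.toLinAlgEquiv'⟩⟩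
end

section
/- Let n ≥ 1, let (η_{ij}) be an invertible symmetric real n×n matrix with inverse (η^{ij}), and let Λ be the exterior (Grassmann) algebra over ℝ on generators ξ^1, …, ξ^n. Suppose Ξ^1, …, Ξ^n ∈ Λ are odd elements (each a sum of homogeneous components of odd degree) and set Ξ_i = η_{ij}Ξ^j (sum over j). If for every i one has Ξ_i + Σ_j ξ_j ∧ (∂_{ξ^i}Ξ^j) = 0, where ξ_j = η_{jk}ξ^k, then there exists a skew-symmetric real matrix (Y_{ij}) such that Ξ_i = Σ_j Y_{ij} ξ^j for all i; in particular every Ξ_i is of degree 1. -/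
noncomputable section

namespace Stmt4

variable {n : ℕ}

/-- The Grassmann algebra Λ on generators ξ^1, …, ξ^n over ℝ. -/
abbrev Lam (n : ℕ) := ExteriorAlgebra ℝ (Fin n → ℝ)

/-- The generator ξ^i of Λ. -/
def ξG (i : Fin n) : Lam n := ExteriorAlgebra.ι ℝ (Pi.single i 1)

/-- The contraction ∂_{ξ^i}: the odd derivation of Λ with ∂_{ξ^i}(ξ^j) = δ_i^j and
∂_{ξ^i}(1) = 0. -/
def dξG (i : Fin n) : Lam n →ₗ[ℝ] Lam n :=
  CliffordAlgebra.contractLeft (Q := (0 : QuadraticForm ℝ (Fin n → ℝ)))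
    (LinearMap.proj i)

/-- An element of Λ is odd when all its homogeneous components have odd degree. -/
def IsOdd (a : Lam n) : Prop :=
  a ∈ CliffordAlgebra.evenOdd (0 : QuadraticForm ℝ (Fin n → ℝ)) 1

end Stmt4

namespace Stmt4Aux
open Stmt4 ExteriorAlgebra
variable {n : ℕ}

abbrev G (n : ℕ) (p : ℕ) : Submodule ℝ (Lam n) := ⋀[ℝ]^p (Fin n → ℝ)

lemma iota_eq_sum (v : Fin n → ℝ) : ExteriorAlgebra.ι ℝ v = ∑ i, v i • ξG i := by
  rw [← Finset.univ_sum_single v, map_sum]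
  refine Finset.sum_congr rfl fun i _ => ?_
  rw [Finset.univ_sum_single v, ξG, ← map_smul, ← Pi.single_smul, smul_eq_mul, mul_one]

lemma swap (v w : Fin n → ℝ) : ι ℝ v * ι ℝ w = -(ι ℝ w * ι ℝ v) :=
  eq_neg_of_add_eq_zero_left (ExteriorAlgebra.ι_add_mul_swap v w)

lemma d_ι_mul (i : Fin n) (v : Fin n → ℝ) (b : Lam n) :
    dξG i (ι ℝ v * b) = v i • b - ι ℝ v * dξG i b :=
  CliffordAlgebra.contractLeft_ι_mul _ _ _

lemma d_algebraMap (i : Fin n) (r : ℝ) : dξG i (algebraMap ℝ (Lam n) r) = 0 :=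
  CliffordAlgebra.contractLeft_algebraMap _ _ _

lemma d_ι (i : Fin n) (v : Fin n → ℝ) : dξG i (ι ℝ v) = algebraMap ℝ (Lam n) (v i) :=
  CliffordAlgebra.contractLeft_ι _ _ _

lemma mem_G_zero {x : Lam n} (hx : x ∈ G n 0) : ∃ r, algebraMap ℝ (Lam n) r = x := by
  have hx' : x ∈ (LinearMap.range (ι ℝ : (Fin n → ℝ) →ₗ[ℝ] Lam n)) ^ 0 := hx
  rw [pow_zero] at hx'
  exact Submodule.mem_one.mp hx'

lemma d_zero (i : Fin n) {x : Lam n} (hx : x ∈ G n 0) : dξG i x = 0 := by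
  obtain ⟨r, rfl⟩ := mem_G_zero hx
  exact d_algebraMap i r

lemma mul_mem_G {p : ℕ} (v : Fin n → ℝ) {x : Lam n} (hx : x ∈ G n p) :
    ι ℝ v * x ∈ G n (p + 1) := by
  show ι ℝ v * x ∈ (LinearMap.range (ι ℝ : (Fin n → ℝ) →ₗ[ℝ] Lam n)) ^ (p + 1)
  rw [pow_succ']
  exact Submodule.mul_mem_mul (LinearMap.mem_range_self _ _) hx

lemma d_mem (i : Fin n) {p : ℕ} {x : Lam n} (hx : x ∈ G n p) : dξG i x ∈ G n (p - 1) := by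
  induction hx using Submodule.pow_induction_on_left' with
  | algebraMap r => rw [d_algebraMap]; exact Submodule.zero_mem _
  | add x y n hx hy ihx ihy => rw [map_add]; exact Submodule.add_mem _ ihx ihy
  | mem_mul m hm q x hx ih =>
    obtain ⟨v, rfl⟩ := hm
    rw [d_ι_mul]
    refine Submodule.sub_mem _ (Submodule.smul_mem _ _ ?_) ?_
    · simpa using hx
    · cases q with
      | zero => rw [d_zero i hx, mul_zero]; exact Submodule.zero_mem _
      | succ q => simpa using mul_mem_G v ih

lemma mul_d_mem (i : Fin n) {p : ℕ} (v : Fin n → ℝ) {x : Lam n} (hx : x ∈ G n p) :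
    ι ℝ v * dξG i x ∈ G n p := by
  cases p with
  | zero => rw [d_zero i hx, mul_zero]; exact Submodule.zero_mem _
  | succ q => simpa using mul_mem_G v (d_mem i hx)

def Eu (n : ℕ) : Lam n →ₗ[ℝ] Lam n := ∑ i, (LinearMap.mulLeft ℝ (ξG i)) ∘ₗ dξG i

lemma Eu_apply (a : Lam n) : Eu n a = ∑ i, ξG i * dξG i a := by
  simp [Eu, LinearMap.sum_apply, LinearMap.mulLeft_apply]

lemma Eu_ι_mul (v : Fin n → ℝ) (b : Lam n) :
    Eu n (ι ℝ v * b) = ι ℝ v * b + ι ℝ v * Eu n b := by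
  rw [Eu_apply]
  have h : ∀ i : Fin n, ξG i * dξG i (ι ℝ v * b)
      = v i • (ξG i * b) + ι ℝ v * (ξG i * dξG i b) := by
    intro i
    rw [d_ι_mul, mul_sub, mul_smul_comm, ξG, ← mul_assoc, swap, neg_mul, mul_assoc,
      sub_neg_eq_add]
  rw [Finset.sum_congr rfl (fun i _ => h i), Finset.sum_add_distrib, ← Finset.mul_sum,
    ← Eu_apply]
  congr 1
  rw [iota_eq_sum, Finset.sum_mul]
  exact Finset.sum_congr rfl fun i _ => (smul_mul_assoc _ _ _).symm

lemma Eu_mem {p : ℕ} {x : Lam n} (hx : x ∈ G n p) : Eu n x = (p : ℝ) • x := by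
  induction hx using Submodule.pow_induction_on_left' with
  | algebraMap r => rw [Eu_apply]; simp [d_algebraMap]
  | add x y q hx hy ihx ihy => rw [map_add, ihx, ihy, smul_add]
  | mem_mul m hm q x hx ih =>
    obtain ⟨v, rfl⟩ := hm
    rw [Eu_ι_mul, ih, mul_smul_comm]
    push_cast
    rw [add_smul, one_smul, add_comm]

lemma comp_eq_zero {s : Finset ℕ} (f : ℕ → Lam n) (d : ℕ → ℕ) (hd : Set.InjOn d ↑s)
    (hf : ∀ p ∈ s, f p ∈ G n (d p)) (h : ∑ p ∈ s, f p = 0) : ∀ q ∈ s, f q = 0 := by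
  classical
  intro q hq
  have h2 := congrArg (fun a => (DirectSum.decompose (fun p => G n p) a (d q) : Lam n)) h
  simp only [DirectSum.decompose_sum, DirectSum.decompose_zero] at h2
  rw [DFinsupp.finset_sum_apply] at h2
  rw [AddSubmonoidClass.coe_finset_sum] at h2
  rw [Finset.sum_eq_single_of_mem q hq] at h2
  · rw [DirectSum.decompose_of_mem_same _ (hf q hq)] at h2
    exact h2
  · intro p hp hpq
    rw [DirectSum.decompose_of_mem_ne _ (hf p hp) (fun hc => hpq (hd hp hq hc))]

end Stmt4Aux

open Stmt4 Stmt4Aux ExteriorAlgebra in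
set_option maxHeartbeats 1000000 in
/-- if odd elements Ξ^i of the Grassmann algebra satisfy
Ξ_i + ξ_j ∧ ∂_{ξ^i}(Ξ^j) = 0 (indices lowered with an invertible symmetric η), then
Ξ_i = Y_{ij} ξ^j for a skew-symmetric real matrix Y; in particular every Ξ_i has degree 1. -/
theorem stmt4 (n : ℕ) (hn : 1 ≤ n)
    (η : Matrix (Fin n) (Fin n) ℝ) (hsym : η.IsSymm) (hdet : IsUnit η.det)
    (Ξ : Fin n → Lam n) (hodd : ∀ i, IsOdd (Ξ i))
    (heq : ∀ i : Fin n,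
      (∑ j, η i j • Ξ j) + ∑ j, (∑ k, η j k • ξG k) * dξG i (Ξ j) = 0) :
    ∃ Y : Matrix (Fin n) (Fin n) ℝ, Y.transpose = -Y ∧
      ∀ i : Fin n, (∑ j, η i j • Ξ j) = ∑ j, Y i j • ξG j := by
  classical
  set ζ : Fin n → Lam n := fun j => ExteriorAlgebra.ι ℝ (η j) with hζdef
  have hζapp : ∀ j : Fin n, ζ j = ExteriorAlgebra.ι ℝ (η j) := fun j => rfl
  have hζ : ∀ j : Fin n, (∑ k, η j k • ξG k) = ζ j := fun j => (iota_eq_sum (η j)).symm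
  have heq' : ∀ i : Fin n,
      (∑ j, η i j • Ξ j) + ∑ j, ζ j * dξG i (Ξ j) = 0 := by
    intro i
    simpa only [hζ] using heq i
  -- components
  set c : Fin n → ℕ → Lam n :=
    fun j p => (DirectSum.decompose (fun p => G n p) (Ξ j) p : Lam n) with hcdef
  have hc_mem : ∀ j p, c j p ∈ G n p := fun j p => SetLike.coe_mem _
  set s : Finset ℕ :=
    Finset.univ.biUnion (fun j : Fin n => (DirectSum.decompose (fun p => G n p) (Ξ j)).support)
    with hsdef
  have hΞ : ∀ j, Ξ j = ∑ p ∈ s, c j p := by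
    intro j
    rw [← DirectSum.sum_support_decompose (fun p => G n p) (Ξ j)]
    refine Finset.sum_subset ?_ ?_
    · intro p hp
      exact Finset.mem_biUnion.mpr ⟨j, Finset.mem_univ j, hp⟩
    · intro p _ hp
      show ((DirectSum.decompose (fun p => G n p) (Ξ j) p : Lam n)) = 0
      rw [DFinsupp.notMem_support_iff.mp hp, ZeroMemClass.coe_zero]
  -- the S and T sums
  set S : ℕ → Lam n := fun p => ∑ j, ζ j * c j p with hSdef
  have hSapp : ∀ p, S p = ∑ j, ζ j * c j p := fun p => rfl
  set T : Fin n → ℕ → Lam n := fun i p => ∑ j, η i j • c j p with hTdef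
  have hTapp : ∀ i p, T i p = ∑ j, η i j • c j p := fun i p => rfl
  have hS_mem : ∀ p, S p ∈ G n (p + 1) :=
    fun p => Submodule.sum_mem _ fun j _ => mul_mem_G (η j) (hc_mem j p)
  have hT_mem : ∀ i p, T i p ∈ G n p :=
    fun i p => Submodule.sum_mem _ fun j _ => Submodule.smul_mem _ _ (hc_mem j p)
  -- Step A : the starred identity
  have hstar' : (∑ j, ζ j * Ξ j) - ∑ j, ζ j * Eu n (Ξ j) = 0 := by
    have h0 : ∑ i, ξG i * ((∑ j, η i j • Ξ j) + ∑ j, ζ j * dξG i (Ξ j)) = 0 := by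
      refine Finset.sum_eq_zero fun i _ => ?_
      rw [heq' i, mul_zero]
    have hA : ∑ i, ξG i * (∑ j, η i j • Ξ j) = ∑ j, ζ j * Ξ j := by
      have e1 : ∀ i : Fin n, ξG i * (∑ j, η i j • Ξ j) = ∑ j, η i j • (ξG i * Ξ j) := by
        intro i; rw [Finset.mul_sum]; exact Finset.sum_congr rfl fun j _ => mul_smul_comm _ _ _
      rw [Finset.sum_congr rfl (fun i _ => e1 i), Finset.sum_comm]
      refine Finset.sum_congr rfl fun j _ => ?_
      have e2 : ζ j = ∑ i, η i j • ξG i := by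
        rw [hζapp j, iota_eq_sum (η j)]
        exact Finset.sum_congr rfl fun i _ => by rw [hsym.apply j i]
      rw [e2, Finset.sum_mul]
      exact Finset.sum_congr rfl fun i _ => (smul_mul_assoc _ _ _).symm
    have hB : ∑ i, ξG i * (∑ j, ζ j * dξG i (Ξ j)) = -∑ j, ζ j * Eu n (Ξ j) := by
      have h1 : ∀ (i j : Fin n) (x : Lam n),
          ξG i * (ζ j * x) = -(ζ j * (ξG i * x)) := by
        intro i j x
        rw [hζapp j, ξG, ← mul_assoc, swap, neg_mul, mul_assoc]
      calc ∑ i, ξG i * (∑ j, ζ j * dξG i (Ξ j))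
          = ∑ i, ∑ j, ξG i * (ζ j * dξG i (Ξ j)) := by
            exact Finset.sum_congr rfl fun i _ => Finset.mul_sum _ _ _
        _ = ∑ j, ∑ i, -(ζ j * (ξG i * dξG i (Ξ j))) := by
            rw [Finset.sum_comm]
            exact Finset.sum_congr rfl fun j _ => Finset.sum_congr rfl fun i _ => h1 i j _
        _ = -∑ j, ζ j * Eu n (Ξ j) := by
            rw [← Finset.sum_neg_distrib]
            refine Finset.sum_congr rfl fun j _ => ?_
            rw [Eu_apply, Finset.mul_sum, Finset.sum_neg_distrib]
    simp only [mul_add] at h0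
    rw [Finset.sum_add_distrib, hA, hB, ← sub_eq_add_neg] at h0
    exact h0
  have hEuΞ : ∀ j, Eu n (Ξ j) = ∑ p ∈ s, (p : ℝ) • c j p := by
    intro j
    rw [hΞ j, map_sum]
    exact Finset.sum_congr rfl fun p _ => Eu_mem (hc_mem j p)
  have hζΞ : ∑ j, ζ j * Ξ j = ∑ p ∈ s, S p := by
    calc ∑ j, ζ j * Ξ j = ∑ j, ∑ p ∈ s, ζ j * c j p := by
          refine Finset.sum_congr rfl fun j _ => ?_
          rw [hΞ j, Finset.mul_sum]
      _ = ∑ p ∈ s, S p := Finset.sum_comm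
  have hζE : ∑ j, ζ j * Eu n (Ξ j) = ∑ p ∈ s, (p : ℝ) • S p := by
    calc ∑ j, ζ j * Eu n (Ξ j) = ∑ j, ∑ p ∈ s, (p : ℝ) • (ζ j * c j p) := by
          refine Finset.sum_congr rfl fun j _ => ?_
          rw [hEuΞ j, Finset.mul_sum]
          exact Finset.sum_congr rfl fun p _ => mul_smul_comm _ _ _
      _ = ∑ p ∈ s, (p : ℝ) • S p := by
          rw [Finset.sum_comm]
          exact Finset.sum_congr rfl fun p _ => (Finset.smul_sum).symm
  have hstar : ∑ p ∈ s, (((1 : ℝ) - p) • S p) = 0 := by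
    calc ∑ p ∈ s, (((1 : ℝ) - p) • S p) = ∑ p ∈ s, (S p - (p : ℝ) • S p) := by
          refine Finset.sum_congr rfl fun p _ => ?_
          rw [sub_smul, one_smul]
      _ = (∑ j, ζ j * Ξ j) - ∑ j, ζ j * Eu n (Ξ j) := by
          rw [Finset.sum_sub_distrib, hζΞ, hζE]
      _ = 0 := hstar'
  have hS0 : ∀ p ∈ s, p ≠ 1 → S p = 0 := by
    intro p hp hp1
    have h1 := comp_eq_zero (fun p => ((1 : ℝ) - p) • S p) (fun p => p + 1)
      (fun a _ b _ hab => by simpa using hab)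
      (fun p _ => Submodule.smul_mem _ _ (hS_mem p)) hstar p hp
    have hne : (1 : ℝ) - p ≠ 0 := by
      refine sub_ne_zero.mpr fun hc => hp1 ?_
      exact_mod_cast hc.symm
    exact (smul_eq_zero.mp h1).resolve_left hne
  -- Step C
  have hTC : ∀ (i : Fin n), ∀ p ∈ s, p ≠ 1 → T i p = ∑ j, ζ j * dξG i (c j p) := by
    intro i p hp hp1
    have h0 : dξG i (S p) = 0 := by rw [hS0 p hp hp1, map_zero]
    have h1 : dξG i (S p) = T i p - ∑ j, ζ j * dξG i (c j p) := by
      rw [hSapp p, map_sum, hTapp, ← Finset.sum_sub_distrib]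
      refine Finset.sum_congr rfl fun j _ => ?_
      rw [hζapp j, d_ι_mul]
      rw [hsym.apply i j]
    rw [h1] at h0
    exact sub_eq_zero.mp h0
  -- Step D
  have hth : ∀ i : Fin n, (∑ j, η i j • Ξ j) = ∑ p ∈ s, T i p := by
    intro i
    calc ∑ j, η i j • Ξ j = ∑ j, ∑ p ∈ s, η i j • c j p := by
          refine Finset.sum_congr rfl fun j _ => ?_
          rw [hΞ j, Finset.smul_sum]
      _ = ∑ p ∈ s, T i p := Finset.sum_comm
  have hdsum : ∀ i : Fin n,
      ∑ j, ζ j * dξG i (Ξ j) = ∑ p ∈ s, ∑ j, ζ j * dξG i (c j p) := by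
    intro i
    calc ∑ j, ζ j * dξG i (Ξ j) = ∑ j, ∑ p ∈ s, ζ j * dξG i (c j p) := by
          refine Finset.sum_congr rfl fun j _ => ?_
          rw [hΞ j, map_sum, Finset.mul_sum]
      _ = ∑ p ∈ s, ∑ j, ζ j * dξG i (c j p) := Finset.sum_comm
  have hD : ∀ (i : Fin n), ∀ p ∈ s, T i p + ∑ j, ζ j * dξG i (c j p) = 0 := by
    intro i
    refine comp_eq_zero _ id (Set.injOn_id _) ?_ ?_
    · intro p _
      refine Submodule.add_mem _ (hT_mem i p) (Submodule.sum_mem _ fun j _ => ?_)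
      rw [hζapp j]
      exact mul_d_mem i (η j) (hc_mem j p)
    · rw [Finset.sum_add_distrib, ← hth i, ← hdsum i]
      exact heq' i
  have hT0 : ∀ (i : Fin n), ∀ p ∈ s, p ≠ 1 → T i p = 0 := by
    intro i p hp hp1
    have h1 := hD i p hp
    rw [← hTC i p hp hp1] at h1
    have h2 : (2 : ℝ) • T i p = 0 := by rw [two_smul]; exact h1
    exact (smul_eq_zero.mp h2).resolve_left two_ne_zero
  -- Θ_i has degree 1
  have hΘ1 : ∀ i : Fin n, (∑ j, η i j • Ξ j) ∈ G n 1 := by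
    intro i
    rw [hth i]
    refine Submodule.sum_mem _ fun p hp => ?_
    by_cases h1 : p = 1
    · subst h1; exact hT_mem i 1
    · rw [hT0 i p hp h1]; exact Submodule.zero_mem _
  have hwex : ∀ i : Fin n, ∃ v : Fin n → ℝ, ι ℝ v = ∑ j, η i j • Ξ j := by
    intro i
    have h1 : (∑ j, η i j • Ξ j) ∈ (LinearMap.range (ι ℝ : (Fin n → ℝ) →ₗ[ℝ] Lam n)) ^ 1 :=
      hΘ1 i
    rw [pow_one] at h1
    exact h1
  choose w hw using hwex
  -- matrix part
  have hMη : η⁻¹ * η = 1 := Matrix.nonsing_inv_mul η hdet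
  have hηM : η * η⁻¹ = 1 := Matrix.mul_nonsing_inv η hdet
  set u : Fin n → Fin n → ℝ := fun j => ∑ i, η⁻¹ j i • w i with hudef
  have huapp : ∀ j, u j = ∑ i, η⁻¹ j i • w i := fun j => rfl
  have hΞι : ∀ j, Ξ j = ι ℝ (u j) := by
    intro j
    have e1 : Ξ j = ∑ k, (η⁻¹ * η) j k • Ξ k := by
      rw [hMη]
      simp [Matrix.one_apply]
    rw [e1]
    calc ∑ k, (η⁻¹ * η) j k • Ξ k = ∑ k, ∑ i, (η⁻¹ j i * η i k) • Ξ k := by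
          simp [Matrix.mul_apply, Finset.sum_smul]
      _ = ∑ i, η⁻¹ j i • ∑ k, η i k • Ξ k := by
          rw [Finset.sum_comm]
          refine Finset.sum_congr rfl fun i _ => ?_
          rw [Finset.smul_sum]
          exact Finset.sum_congr rfl fun k _ => (mul_smul _ _ _)
      _ = ∑ i, η⁻¹ j i • ι ℝ (w i) := by
          refine Finset.sum_congr rfl fun i _ => ?_
          rw [hw i]
      _ = ι ℝ (u j) := by
          rw [huapp j, map_sum]
          exact Finset.sum_congr rfl fun i _ => (map_smul _ _ _).symm
  have hu : ∀ m, ∑ j, η m j • u j = w m := by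
    intro m
    calc ∑ j, η m j • u j = ∑ j, ∑ i, (η m j * η⁻¹ j i) • w i := by
          refine Finset.sum_congr rfl fun j _ => ?_
          rw [huapp j, Finset.smul_sum]
          exact Finset.sum_congr rfl fun i _ => (mul_smul _ _ _).symm
      _ = ∑ i, (η * η⁻¹) m i • w i := by
          rw [Finset.sum_comm]
          refine Finset.sum_congr rfl fun i _ => ?_
          rw [Matrix.mul_apply, Finset.sum_smul]
      _ = w m := by
          rw [hηM]
          simp [Matrix.one_apply]
  have hkey : ∀ i m, w i m + w m i = 0 := by
    intro i m
    have h1 := heq' i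
    rw [← hw i] at h1
    have h2 : ∀ j : Fin n, ζ j * dξG i (Ξ j) = u j i • ζ j := by
      intro j
      rw [hΞι j, d_ι, ← Algebra.commutes, ← Algebra.smul_def]
    rw [Finset.sum_congr rfl fun j _ => h2 j] at h1
    have h3 : ∑ j, u j i • ζ j = ι ℝ (∑ j, u j i • η j) := by
      rw [map_sum]
      refine Finset.sum_congr rfl fun j _ => ?_
      rw [hζapp j]
      exact (map_smul _ _ _).symm
    rw [h3, ← map_add] at h1
    have h5 : w i + ∑ j, u j i • η j = 0 := by
      have := ExteriorAlgebra.ι_eq_zero_iff (R := ℝ) (w i + ∑ j, u j i • η j)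
      exact this.mp h1
    have h6 := congrFun h5 m
    simp only [Pi.add_apply, Finset.sum_apply, Pi.smul_apply, smul_eq_mul,
      Pi.zero_apply] at h6
    have h7 : ∑ j, u j i * η j m = w m i := by
      have h8 := congrFun (hu m) i
      simp only [Finset.sum_apply, Pi.smul_apply, smul_eq_mul] at h8
      rw [← h8]
      refine Finset.sum_congr rfl fun j _ => ?_
      rw [hsym.apply m j, mul_comm]
    rw [h7] at h6
    exact h6
  refine ⟨Matrix.of (fun i j => w i j), ?_, ?_⟩
  · ext i j
    simp only [Matrix.transpose_apply, Matrix.neg_apply, Matrix.of_apply]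
    have := hkey j i
    linarith
  · intro i
    rw [← hw i, iota_eq_sum]
    exact Finset.sum_congr rfl fun j _ => by rw [Matrix.of_apply]
end
end
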